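/- arXiv:2004.06351 — 3 statements merged into one kernel-verified Lean document; each statement's English description precedes it below -/
import Mathlib

section
/- For every η ∈ ℝ³ ∖ {0} and every α ∈ {1,2,3} the identity P^∓(η)·s^α·P^±(η) = ±2‖η‖·P^∓(η)·(∂P^±/∂η_α)(η) holds (with matching upper/lower choices of signs). -/
open Matrix

noncomputable section

/-- The three Pauli matrices. -/
def pauli : Fin 3 → Matrix (Fin 2) (Fin 2) ℂ
  | 0 => !![0, 1; 1, 0]
  | 1 => !![0, -Complex.I; Complex.I, 0]
  | 2 => !![1, 0; 0, -1]

/-- The Euclidean norm on `ℝ³` (presented as `Fin 3 → ℝ`). -/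
def enorm3 (η : Fin 3 → ℝ) : ℝ := Real.sqrt (∑ i, η i ^ 2)

/-- `σ(η) = η₁ s¹ + η₂ s² + η₃ s³`. -/
def pauliSigma (η : Fin 3 → ℝ) : Matrix (Fin 2) (Fin 2) ℂ :=
  ∑ i, (η i : ℂ) • pauli i

/-- The spectral projections `P^±(η) = (1/2)(I ± σ(η)/‖η‖)`; `s = 1` gives `P⁺`,
`s = -1` gives `P⁻`. -/
def specProj (s : ℝ) (η : Fin 3 → ℝ) : Matrix (Fin 2) (Fin 2) ℂ :=
  (2⁻¹ : ℂ) • ((1 : Matrix (Fin 2) (Fin 2) ℂ) + ((s / enorm3 η : ℝ) : ℂ) • pauliSigma η)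

/-! Since `σ(η)² = ‖η‖²` and `s^α σ(η) + σ(η) s^α = 2η_α`, the projection `P^∓` absorbs `σ(η)`
as the scalar `∓‖η‖`. Differentiating `P^± = (1 ± σ(η)/‖η‖)/2` gives
`∂P^±/∂η_α = ±(s^α - η_α σ(η)/‖η‖²)/(2‖η‖)`, and with this both sides of the identity reduce to
`P^∓ s^α ± (η_α/‖η‖) P^∓`. -/

lemma pauli_mul_pauliSigma_add_pauliSigma_mul_pauli (η : Fin 3 → ℝ) (α : Fin 3) :
    pauli α * pauliSigma η + pauliSigma η * pauli α = (2 * (η α : ℂ)) • 1 := by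
  ext i j
  fin_cases α <;> fin_cases i <;> fin_cases j <;>
    simp [pauli, pauliSigma, Fin.sum_univ_three] <;>
    ring_nf <;> simp [Complex.I_sq]

lemma pauliSigma_mul_self (η : Fin 3 → ℝ) :
    pauliSigma η * pauliSigma η = ((enorm3 η ^ 2 : ℝ) : ℂ) • 1 := by
  rw [enorm3, Real.sq_sqrt (by positivity)]
  ext i j
  fin_cases i <;> fin_cases j <;>
    simp [pauli, pauliSigma, Fin.sum_univ_three, Matrix.mul_apply] <;>
    ring_nf <;> simp [Complex.I_sq]

lemma enorm3_pos {η : Fin 3 → ℝ} (hη : η ≠ 0) : 0 < enorm3 η := by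
  obtain ⟨k, hk⟩ := Function.ne_iff.mp hη
  exact Real.sqrt_pos.mpr <| Finset.sum_pos' (fun i _ => sq_nonneg _)
    ⟨k, Finset.mem_univ k, sq_pos_of_ne_zero hk⟩

lemma specProj_mul_pauliSigma {η : Fin 3 → ℝ} (hη : η ≠ 0) {s : ℝ} (hs : s ^ 2 = 1) :
    specProj s η * pauliSigma η = ((s * enorm3 η : ℝ) : ℂ) • specProj s η := by
  have hr : (enorm3 η : ℂ) ≠ 0 := by exact_mod_cast (enorm3_pos hη).ne'
  have hs' : (s : ℂ) ^ 2 = 1 := by exact_mod_cast hs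
  simp only [specProj, smul_mul_assoc, add_mul, one_mul, pauliSigma_mul_self, smul_add, smul_smul]
  push_cast
  match_scalars <;> field_simp
  exact hs'.symm

lemma specProj_neg_mul_pauli_mul_specProj {η : Fin 3 → ℝ} (hη : η ≠ 0) {s : ℝ} (hs : s ^ 2 = 1)
    (α : Fin 3) :
    specProj (-s) η * pauli α * specProj s η =
      specProj (-s) η * pauli α + ((s * η α / enorm3 η : ℝ) : ℂ) • specProj (-s) η := by
  have hr : (enorm3 η : ℂ) ≠ 0 := by exact_mod_cast (enorm3_pos hη).ne'
  have hs' : (s : ℂ) ^ 2 = 1 := by exact_mod_cast hs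
  have hAS : pauli α * pauliSigma η = (2 * (η α : ℂ)) • 1 - pauliSigma η * pauli α :=
    eq_sub_of_add_eq (pauli_mul_pauliSigma_add_pauliSigma_mul_pauli η α)
  have hPS := specProj_mul_pauliSigma hη (s := -s) (by rw [neg_sq, hs])
  calc specProj (-s) η * pauli α * specProj s η
      = (2⁻¹ : ℂ) • (specProj (-s) η * pauli α
          + ((s / enorm3 η : ℝ) : ℂ) • (specProj (-s) η * (pauli α * pauliSigma η))) := by
        have hP : specProj s η = (2⁻¹ : ℂ) • (1 + ((s / enorm3 η : ℝ) : ℂ) • pauliSigma η) := rfl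
        rw [hP, mul_smul_comm, mul_add, mul_one, mul_smul_comm, mul_assoc]
    _ = _ := by
        rw [hAS, mul_sub, ← mul_assoc, hPS, mul_smul_comm, mul_one, smul_mul_assoc]
        push_cast
        match_scalars <;> field_simp
        linear_combination hs'

lemma pauliSigma_update (η : Fin 3 → ℝ) (α : Fin 3) (t : ℝ) :
    pauliSigma (Function.update η α t) = pauliSigma η + ((t - η α : ℝ) : ℂ) • pauli α := by
  fin_cases α <;>
    simp [pauliSigma, Fin.sum_univ_three, Function.update, sub_smul] <;> abel

lemma hasDerivAt_enorm3_update {η : Fin 3 → ℝ} (hη : η ≠ 0) (α : Fin 3) :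
    HasDerivAt (fun t => enorm3 (Function.update η α t)) (η α / enorm3 η) (η α) := by
  have hsum (t : ℝ) : ∑ i, Function.update η α t i ^ 2 = t ^ 2 + (∑ i, η i ^ 2 - η α ^ 2) := by
    fin_cases α <;> simp [Fin.sum_univ_three, Function.update] <;> ring
  have hQ : ∑ i, η i ^ 2 ≠ 0 := (Real.sqrt_pos.mp (enorm3_pos hη)).ne'
  have hg : HasDerivAt (fun t => ∑ i, Function.update η α t i ^ 2) (2 * η α) (η α) := by
    rw [funext hsum]
    simpa using (hasDerivAt_pow 2 (η α)).add_const (∑ i, η i ^ 2 - η α ^ 2)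
  have h := hg.sqrt (by simpa using hQ)
  rw [Function.update_eq_self] at h
  exact h.congr_deriv (by rw [enorm3]; field_simp)

def specProjDeriv (s : ℝ) (η : Fin 3 → ℝ) (α : Fin 3) : Matrix (Fin 2) (Fin 2) ℂ :=
  ((s / (2 * enorm3 η) : ℝ) : ℂ) • (pauli α - ((η α / enorm3 η ^ 2 : ℝ) : ℂ) • pauliSigma η)

lemma hasDerivAt_specProj_update_apply {η : Fin 3 → ℝ} (hη : η ≠ 0) (s : ℝ) (α : Fin 3)
    (i j : Fin 2) :
    HasDerivAt (fun t => specProj s (Function.update η α t) i j) (specProjDeriv s η α i j)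
      (η α) := by
  have hr := (enorm3_pos hη).ne'
  have hr' : (enorm3 η : ℂ) ≠ 0 := by exact_mod_cast hr
  have hN := hasDerivAt_enorm3_update hη α
  have hc : HasDerivAt (fun t => ((s / enorm3 (Function.update η α t) : ℝ) : ℂ))
      ((-(s * η α) / enorm3 η ^ 3 : ℝ) : ℂ) (η α) := by
    convert ((hasDerivAt_const _ s).div hN (by simpa using hr)).ofReal_comp using 2 <;> simp
    field_simp
  have hσ : HasDerivAt (fun t => pauliSigma (Function.update η α t) i j) (pauli α i j) (η α) := by
    simp only [pauliSigma_update, Matrix.add_apply, Matrix.smul_apply, smul_eq_mul]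
    simpa using ((((hasDerivAt_id (η α)).sub_const (η α)).ofReal_comp).mul_const
      (pauli α i j)).const_add (pauliSigma η i j)
  have hP : (fun t => specProj s (Function.update η α t) i j) = fun t => (2⁻¹ : ℂ) *
      ((1 : Matrix (Fin 2) (Fin 2) ℂ) i j + ((s / enorm3 (Function.update η α t) : ℝ) : ℂ) *
        pauliSigma (Function.update η α t) i j) := by
    funext t
    simp [specProj]
  rw [hP]
  refine (((hc.mul hσ).const_add _).const_mul _).congr_deriv ?_
  simp only [specProjDeriv, Function.update_eq_self, Matrix.smul_apply, Matrix.sub_apply,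
    smul_eq_mul]
  push_cast
  field_simp
  ring

lemma specProj_neg_mul_specProjDeriv {η : Fin 3 → ℝ} (hη : η ≠ 0) {s : ℝ} (hs : s ^ 2 = 1)
    (α : Fin 3) :
    ((s * (2 * enorm3 η) : ℝ) : ℂ) • (specProj (-s) η * specProjDeriv s η α) =
      specProj (-s) η * pauli α + ((s * η α / enorm3 η : ℝ) : ℂ) • specProj (-s) η := by
  have hr : (enorm3 η : ℂ) ≠ 0 := by exact_mod_cast (enorm3_pos hη).ne'
  have hs' : (s : ℂ) ^ 2 = 1 := by exact_mod_cast hs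
  have hPS := specProj_mul_pauliSigma hη (s := -s) (by rw [neg_sq, hs])
  rw [specProjDeriv, mul_smul_comm, mul_sub, mul_smul_comm, hPS]
  push_cast
  match_scalars <;> field_simp
  · exact hs'
  · linear_combination s * η α * hs'

/-- `P^∓(η) s^α P^±(η) = ±2‖η‖ P^∓(η) ∂P^±/∂η_α(η)`, where the matrix `D` is the
partial derivative of `η ↦ P^±(η)` in the direction `η_α`. -/
theorem specProj_pauli_specProj (η : Fin 3 → ℝ) (hη : η ≠ 0)
    (s : ℝ) (hs : s = 1 ∨ s = -1) (α : Fin 3)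
    (D : Matrix (Fin 2) (Fin 2) ℂ)
    (hD : ∀ i j : Fin 2,
      HasDerivAt (fun t : ℝ => specProj s (Function.update η α t) i j) (D i j) (η α)) :
    specProj (-s) η * pauli α * specProj s η =
      ((s * (2 * enorm3 η) : ℝ) : ℂ) • (specProj (-s) η * D) := by
  have hs2 : s ^ 2 = 1 := by rcases hs with rfl | rfl <;> norm_num
  have hD' : D = specProjDeriv s η α := by
    ext i j
    exact (hD i j).unique (hasDerivAt_specProj_update_apply hη s α i j)
  rw [hD', specProj_neg_mul_specProjDeriv hη hs2, specProj_neg_mul_pauli_mul_specProj hη hs2]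
end
end

section
/- Let ẽ : ℝ³ → Fin 3 → ℝ³ be a smooth map such that for each x the vectors ẽ₁(x), ẽ₂(x), ẽ₃(x) form an orthonormal basis of ℝ³, let G : ℝ³ → Matrix 2 2 ℂ be smooth with G(x) ∈ SU(2) for all x, and define e_j^α(x) := (1/2)·Σ_k tr( s_j · G(x)* · s^k · G(x) ) · ẽ_k^α(x). For a smooth orthonormal frame f define σ[f]^α(x) := Σ_j s^j · f_j^α(x) and the flat Dirac operator (W[f]u)(x) := −i·Σ_α σ[f]^α(x)·( ∂u/∂x^α(x) + (1/4)·Σ_β σ[f]^β(x)·(∂σ[f]^β/∂x^α)(x)·u(x) ) acting on smooth functions u : ℝ³ → ℂ². Then for every smooth u : ℝ³ → ℂ² and every x ∈ ℝ³: G(x)*·( W[ẽ](G·u) )(x) = ( W[e]u )(x), i.e. G*·W[ẽ]·G = W[e] as operators on C^∞(ℝ³;ℂ²). -/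
open Matrix

noncomputable section

/-- Partial derivative in the direction `x^α` of a complex-valued function on `ℝ³`. -/
def pdC (α : Fin 3) (g : (Fin 3 → ℝ) → ℂ) (x : Fin 3 → ℝ) : ℂ :=
  fderiv ℝ g x (Pi.single α 1)

/-- Projection of the Pauli matrices along a frame: `σ[f]^α(x) = Σ_j s^j f_j^α(x)`. -/
def sigmaF (f : (Fin 3 → ℝ) → Fin 3 → Fin 3 → ℝ) (α : Fin 3) (x : Fin 3 → ℝ) :
    Matrix (Fin 2) (Fin 2) ℂ :=
  ∑ j, ((f x j α : ℝ) : ℂ) • pauli j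

/-- The flat massless Dirac operator associated with a frame `f`:
`(W[f]u)(x) = −i Σ_α σ[f]^α(x) ( ∂u/∂x^α(x) + (1/4) Σ_β σ[f]^β(x) (∂σ[f]^β/∂x^α)(x) u(x) )`. -/
def diracOp (f : (Fin 3 → ℝ) → Fin 3 → Fin 3 → ℝ)
    (u : (Fin 3 → ℝ) → Fin 2 → ℂ) (x : Fin 3 → ℝ) : Fin 2 → ℂ :=
  (-Complex.I) • ∑ α : Fin 3,
    (sigmaF f α x).mulVec
      ((fun i => pdC α (fun y => u y i) x) +
        ((4⁻¹ : ℂ) • ∑ β : Fin 3,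
          sigmaF f β x * Matrix.of (fun i j => pdC α (fun y => sigmaF f β y i j) x)).mulVec (u x))


lemma pdC_const (α : Fin 3) (c : ℂ) (x : Fin 3 → ℝ) : pdC α (fun _ => c) x = 0 := by
  simp [pdC]

lemma pdC_add (α : Fin 3) {f g : (Fin 3 → ℝ) → ℂ} (x : Fin 3 → ℝ)
    (hf : DifferentiableAt ℝ f x) (hg : DifferentiableAt ℝ g x) :
    pdC α (fun y => f y + g y) x = pdC α f x + pdC α g x := by
  simp [pdC, fderiv_fun_add hf hg]

lemma pdC_mul (α : Fin 3) {f g : (Fin 3 → ℝ) → ℂ} (x : Fin 3 → ℝ)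
    (hf : DifferentiableAt ℝ f x) (hg : DifferentiableAt ℝ g x) :
    pdC α (fun y => f y * g y) x = pdC α f x * g x + f x * pdC α g x := by
  simp [pdC, fderiv_fun_mul hf hg]; ring

lemma pdC_sum {ι : Type*} (α : Fin 3) {s : Finset ι} {f : ι → (Fin 3 → ℝ) → ℂ} (x : Fin 3 → ℝ)
    (hf : ∀ i ∈ s, DifferentiableAt ℝ (f i) x) :
    pdC α (fun y => ∑ i ∈ s, f i y) x = ∑ i ∈ s, pdC α (f i) x := by
  simp [pdC, fderiv_fun_sum hf]

lemma pdC_conj (α : Fin 3) {f : (Fin 3 → ℝ) → ℂ} (x : Fin 3 → ℝ) :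
    pdC α (fun y => (starRingEnd ℂ) (f y)) x = (starRingEnd ℂ) (pdC α f x) := by
  have : (fun y => (starRingEnd ℂ) (f y)) = (Complex.conjCLE ∘ f) := rfl
  rw [pdC, this, Complex.conjCLE.comp_fderiv]
  rfl


/-- Entrywise derivative of a matrix-valued function. -/
def MD (α : Fin 3) (F : (Fin 3 → ℝ) → Matrix (Fin 2) (Fin 2) ℂ) (x : Fin 3 → ℝ) :
    Matrix (Fin 2) (Fin 2) ℂ :=
  Matrix.of fun i j => pdC α (fun y => F y i j) x

/-- Entrywise differentiability. -/
def EDiff (F : (Fin 3 → ℝ) → Matrix (Fin 2) (Fin 2) ℂ) (x : Fin 3 → ℝ) : Prop :=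
  ∀ i j, DifferentiableAt ℝ (fun y => F y i j) x

lemma EDiff.mul {P Q : (Fin 3 → ℝ) → Matrix (Fin 2) (Fin 2) ℂ} {x : Fin 3 → ℝ}
    (hP : EDiff P x) (hQ : EDiff Q x) : EDiff (fun y => P y * Q y) x := by
  intro i j
  have : (fun y => (P y * Q y) i j) = fun y => ∑ k, P y i k * Q y k j := by
    funext y; simp [Matrix.mul_apply]
  rw [this]
  exact DifferentiableAt.fun_sum fun k _ => (hP i k).fun_mul (hQ k j)

lemma EDiff.conjT {P : (Fin 3 → ℝ) → Matrix (Fin 2) (Fin 2) ℂ} {x : Fin 3 → ℝ}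
    (hP : EDiff P x) : EDiff (fun y => (P y)ᴴ) x := by
  intro i j
  have : (fun y => (P y)ᴴ i j) = fun y => Complex.conjCLE (P y j i) := rfl
  rw [this]
  exact Complex.conjCLE.differentiable.differentiableAt.comp x (hP j i)

lemma MD_mul (α : Fin 3) {P Q : (Fin 3 → ℝ) → Matrix (Fin 2) (Fin 2) ℂ} {x : Fin 3 → ℝ}
    (hP : EDiff P x) (hQ : EDiff Q x) :
    MD α (fun y => P y * Q y) x = MD α P x * Q x + P x * MD α Q x := by
  ext i j
  have h1 : (fun y => (P y * Q y) i j) = fun y => ∑ k, P y i k * Q y k j := by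
    funext y; simp [Matrix.mul_apply]
  simp only [MD, Matrix.of_apply, h1, Matrix.add_apply, Matrix.mul_apply]
  rw [pdC_sum α x (fun k _ => (hP i k).fun_mul (hQ k j))]
  rw [Finset.sum_add_distrib.symm]
  exact Finset.sum_congr rfl fun k _ => pdC_mul α x (hP i k) (hQ k j)

lemma MD_conjT (α : Fin 3) {P : (Fin 3 → ℝ) → Matrix (Fin 2) (Fin 2) ℂ} {x : Fin 3 → ℝ} :
    MD α (fun y => (P y)ᴴ) x = (MD α P x)ᴴ := by
  ext i j
  simp only [MD, Matrix.of_apply, Matrix.conjTranspose_apply]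
  exact pdC_conj α x

lemma MD_congr (α : Fin 3) {P Q : (Fin 3 → ℝ) → Matrix (Fin 2) (Fin 2) ℂ} {x : Fin 3 → ℝ}
    (h : ∀ y, P y = Q y) : MD α P x = MD α Q x := by
  have : P = Q := funext h
  rw [this]

lemma MD_one (α : Fin 3) (x : Fin 3 → ℝ) : MD α (fun _ => (1 : Matrix (Fin 2) (Fin 2) ℂ)) x = 0 := by
  ext i j
  simp [MD, pdC_const]

lemma pauli_reconstruct (M : Matrix (Fin 2) (Fin 2) ℂ) (hM : M.trace = 0) :
    ∑ j, ((2⁻¹ : ℂ) * (pauli j * M).trace) • pauli j = M := by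
  have h11 : M 1 1 = - M 0 0 := by
    simp [Matrix.trace_fin_two] at hM; linear_combination hM
  ext i j
  fin_cases i <;> fin_cases j <;>
    simp [pauli, Fin.sum_univ_succ, Matrix.trace_fin_two, Matrix.mul_apply,
      Matrix.smul_apply, Matrix.sum_apply, h11] <;>
    (ring_nf; try simp only [Complex.I_sq]) <;> try ring

lemma pauli_sandwich (M : Matrix (Fin 2) (Fin 2) ℂ) :
    ∑ j, pauli j * M * pauli j = ((2 : ℂ) * M.trace) • 1 - M := by
  ext i j
  fin_cases i <;> fin_cases j <;>
    simp [pauli, Fin.sum_univ_succ, Matrix.trace_fin_two, Matrix.mul_apply,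
      Matrix.smul_apply, Matrix.sum_apply, Matrix.one_apply] <;>
    (ring_nf; simp only [Complex.I_sq]; try ring)

lemma pauli_sq : ∑ j, pauli j * pauli j = ((3 : ℂ)) • (1 : Matrix (Fin 2) (Fin 2) ℂ) := by
  ext i j
  fin_cases i <;> fin_cases j <;>
    simp [pauli, Fin.sum_univ_succ, Matrix.mul_apply, Matrix.smul_apply,
      Matrix.sum_apply, Matrix.one_apply] <;>
    (ring_nf; try simp only [Complex.I_sq]) <;> try ring


lemma trace_pauli (k : Fin 3) : (pauli k).trace = 0 := by
  fin_cases k <;> simp [pauli, Matrix.trace_fin_two]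

lemma sigma_e_eq
    (G : (Fin 3 → ℝ) → Matrix (Fin 2) (Fin 2) ℂ)
    (et e : (Fin 3 → ℝ) → Fin 3 → Fin 3 → ℝ) (β : Fin 3) (y : Fin 3 → ℝ)
    (hGu : G y * (G y)ᴴ = 1)
    (he : ∀ j α : Fin 3, (e y j α : ℂ) =
        ∑ k, (2⁻¹ : ℂ) * Matrix.trace (pauli j * (G y)ᴴ * pauli k * G y) * (et y k α : ℂ)) :
    sigmaF e β y = (G y)ᴴ * sigmaF et β y * G y := by
  have htr : ∀ k : Fin 3, ((G y)ᴴ * pauli k * G y).trace = 0 := by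
    intro k
    rw [Matrix.trace_mul_comm, ← Matrix.mul_assoc, hGu, Matrix.one_mul, trace_pauli]
  calc sigmaF e β y
      = ∑ j, (∑ k, ((2⁻¹ : ℂ) * ((pauli j * ((G y)ᴴ * pauli k * G y)).trace)) *
          ((et y k β : ℝ) : ℂ)) • pauli j := by
        unfold sigmaF
        refine Finset.sum_congr rfl fun j _ => ?_
        rw [he j β]
        congr 1
        simp only [Matrix.mul_assoc]
    _ = ∑ k, ((et y k β : ℝ) : ℂ) •
          ∑ j, ((2⁻¹ : ℂ) * (pauli j * ((G y)ᴴ * pauli k * G y)).trace) • pauli j := by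
        simp only [Finset.sum_smul, Finset.smul_sum, smul_smul]
        rw [Finset.sum_comm]
        exact Finset.sum_congr rfl fun j _ => Finset.sum_congr rfl fun k _ => by
          rw [mul_comm]
    _ = ∑ k, ((et y k β : ℝ) : ℂ) • ((G y)ᴴ * pauli k * G y) := by
        refine Finset.sum_congr rfl fun k _ => ?_
        rw [pauli_reconstruct _ (htr k)]
    _ = (G y)ᴴ * sigmaF et β y * G y := by
        unfold sigmaF
        rw [Matrix.mul_sum, Matrix.sum_mul]
        exact Finset.sum_congr rfl fun k _ => by
          simp [mul_smul_comm, smul_mul_assoc, Matrix.mul_assoc]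

lemma sigma_sandwich (et : (Fin 3 → ℝ) → Fin 3 → Fin 3 → ℝ) (x : Fin 3 → ℝ)
    (hcol : ∀ j k : Fin 3, ∑ β, et x j β * et x k β = if j = k then 1 else 0)
    (M : Matrix (Fin 2) (Fin 2) ℂ) :
    ∑ β, sigmaF et β x * M * sigmaF et β x = ((2 : ℂ) * M.trace) • 1 - M := by
  have key : ∀ j k : Fin 3,
      (∑ β, ((et x j β : ℝ) : ℂ) * ((et x k β : ℝ) : ℂ)) = if j = k then (1:ℂ) else 0 := by
    intro j k
    have h := hcol j k
    have h2 : ((∑ β, et x j β * et x k β : ℝ) : ℂ) = if j = k then (1:ℂ) else 0 := by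
      rw [h]; split <;> simp
    rw [← h2]
    push_cast
    ring
  calc ∑ β, sigmaF et β x * M * sigmaF et β x
      = ∑ β, ∑ j, ∑ k, (((et x j β : ℝ) : ℂ) * ((et x k β : ℝ) : ℂ)) •
          (pauli j * M * pauli k) := by
        simp only [sigmaF, Finset.sum_mul, Finset.mul_sum, smul_mul_assoc, mul_smul_comm,
          smul_smul, Finset.smul_sum]
        refine Finset.sum_congr rfl fun β _ => ?_
        rw [Finset.sum_comm]
        exact Finset.sum_congr rfl fun j _ => Finset.sum_congr rfl fun k _ => by rw [mul_comm]
    _ = ∑ j, ∑ k, (∑ β, ((et x j β : ℝ) : ℂ) * ((et x k β : ℝ) : ℂ)) •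
          (pauli j * M * pauli k) := by
        rw [Finset.sum_comm]
        refine Finset.sum_congr rfl fun j _ => ?_
        rw [Finset.sum_comm]
        refine Finset.sum_congr rfl fun k _ => ?_
        rw [Finset.sum_smul]
    _ = ∑ j, pauli j * M * pauli j := by
        refine Finset.sum_congr rfl fun j _ => ?_
        rw [Finset.sum_eq_single j]
        · rw [key j j]; simp
        · intro k _ hk
          rw [key j k, if_neg (fun h => hk h.symm), zero_smul]
        · simp
    _ = ((2 : ℂ) * M.trace) • 1 - M := pauli_sandwich M

lemma sigma_sq_sum (et : (Fin 3 → ℝ) → Fin 3 → Fin 3 → ℝ) (x : Fin 3 → ℝ)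
    (hcol : ∀ j k : Fin 3, ∑ β, et x j β * et x k β = if j = k then 1 else 0) :
    ∑ β, sigmaF et β x * sigmaF et β x = (3 : ℂ) • 1 := by
  have h := sigma_sandwich et x hcol 1
  have h2 : ∀ β, sigmaF et β x * 1 * sigmaF et β x = sigmaF et β x * sigmaF et β x := by
    intro β; rw [Matrix.mul_one]
  rw [← Finset.sum_congr rfl fun β _ => h2 β, h, Matrix.trace_one]
  ext i j
  by_cases hij : i = j <;>
    simp [hij, Matrix.sub_apply, Matrix.smul_apply, Matrix.one_apply] <;> norm_num

lemma pdC_sub (α : Fin 3) {f g : (Fin 3 → ℝ) → ℂ} (x : Fin 3 → ℝ)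
    (hf : DifferentiableAt ℝ f x) (hg : DifferentiableAt ℝ g x) :
    pdC α (fun y => f y - g y) x = pdC α f x - pdC α g x := by
  simp [pdC, fderiv_fun_sub hf hg]

lemma unitary_deriv (G : (Fin 3 → ℝ) → Matrix (Fin 2) (Fin 2) ℂ) (x : Fin 3 → ℝ) (α : Fin 3)
    (hGd : EDiff G x) (hGu : ∀ y, G y * (G y)ᴴ = 1) :
    MD α G x * (G x)ᴴ + G x * (MD α G x)ᴴ = 0 := by
  have h0 : MD α (fun y => G y * (G y)ᴴ) x = 0 := by
    rw [MD_congr α (fun y => hGu y), MD_one]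
  rw [MD_mul α hGd hGd.conjT, MD_conjT] at h0
  exact h0

lemma gstar_eq_adjugate (G : (Fin 3 → ℝ) → Matrix (Fin 2) (Fin 2) ℂ) (x : Fin 3 → ℝ)
    (hGu : ∀ y, G y * (G y)ᴴ = 1) (hdet : ∀ y, (G y).det = 1) :
    (G x)ᴴ = (G x).adjugate := by
  have h1 : (G x).adjugate * (G x) = 1 := by
    rw [Matrix.adjugate_mul, hdet x, one_smul]
  calc (G x)ᴴ = 1 * (G x)ᴴ := (Matrix.one_mul _).symm
    _ = ((G x).adjugate * G x) * (G x)ᴴ := by rw [h1]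
    _ = (G x).adjugate * (G x * (G x)ᴴ) := Matrix.mul_assoc _ _ _
    _ = (G x).adjugate := by rw [hGu x, Matrix.mul_one]

lemma det_deriv_trace (G : (Fin 3 → ℝ) → Matrix (Fin 2) (Fin 2) ℂ) (x : Fin 3 → ℝ) (α : Fin 3)
    (hGd : EDiff G x) (hGu : ∀ y, G y * (G y)ᴴ = 1) (hdet : ∀ y, (G y).det = 1) :
    (MD α G x * (G x)ᴴ).trace = 0 := by
  have hd : pdC α (fun y => G y 0 0 * G y 1 1 - G y 0 1 * G y 1 0) x = 0 := by
    have h1 : (fun y => G y 0 0 * G y 1 1 - G y 0 1 * G y 1 0) = fun _ => (1 : ℂ) := by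
      funext y
      rw [← Matrix.det_fin_two, hdet y]
    rw [h1, pdC_const]
  rw [pdC_sub α x ((hGd 0 0).fun_mul (hGd 1 1)) ((hGd 0 1).fun_mul (hGd 1 0)),
    pdC_mul α x (hGd 0 0) (hGd 1 1), pdC_mul α x (hGd 0 1) (hGd 1 0)] at hd
  rw [gstar_eq_adjugate G x hGu hdet, Matrix.adjugate_fin_two]
  simp [Matrix.trace_fin_two, Matrix.mul_apply, Fin.sum_univ_two, MD]
  linear_combination hd

lemma key_identity (g gs Dg Dgs : Matrix (Fin 2) (Fin 2) ℂ) (A DA : Fin 3 → Matrix (Fin 2) (Fin 2) ℂ)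
    (α : Fin 3)
    (hggs : g * gs = 1) (hgsg : gs * g = 1)
    (hDer : Dg * gs + g * Dgs = 0)
    (htr : (Dg * gs).trace = 0)
    (hsand : ∀ M, ∑ β, A β * M * A β = ((2 : ℂ) * M.trace) • 1 - M)
    (hsq : ∑ β, A β * A β = (3 : ℂ) • 1) :
    gs * A α * Dg + (4⁻¹ : ℂ) • (gs * A α * (∑ β, A β * DA β) * g)
      = (4⁻¹ : ℂ) • ((gs * A α * g) *
          ∑ β, (gs * A β * g) * (Dgs * A β * g + gs * DA β * g + gs * A β * Dg)) := by
  have hMg : g * Dgs = -(Dg * gs) := by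
    have := hDer
    linear_combination (norm := abel) this
  have htr2 : (g * Dgs).trace = 0 := by rw [hMg, Matrix.trace_neg, htr, neg_zero]
  have hstep : ∑ β, (gs * A β * g) * (Dgs * A β * g + gs * DA β * g + gs * A β * Dg)
      = gs * Dg + gs * (∑ β, A β * DA β) * g + (3 : ℂ) • (gs * Dg) := by
    have e1 : ∀ β, (gs * A β * g) * (Dgs * A β * g) = gs * (A β * (g * Dgs) * A β) * g := by
      intro β; noncomm_ring
    have e2 : ∀ β, (gs * A β * g) * (gs * DA β * g) = gs * (A β * (g * gs) * DA β) * g := by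
      intro β; noncomm_ring
    have e3 : ∀ β, (gs * A β * g) * (gs * A β * Dg) = gs * (A β * (g * gs) * A β) * Dg := by
      intro β; noncomm_ring
    calc ∑ β, (gs * A β * g) * (Dgs * A β * g + gs * DA β * g + gs * A β * Dg)
        = ∑ β, (gs * (A β * (g * Dgs) * A β) * g + gs * (A β * DA β) * g
            + gs * (A β * A β) * Dg) := by
          refine Finset.sum_congr rfl fun β _ => ?_
          rw [mul_add, mul_add, e1 β, e2 β, e3 β, hggs]
          simp [Matrix.mul_one]
      _ = gs * (∑ β, A β * (g * Dgs) * A β) * g + gs * (∑ β, A β * DA β) * g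
            + gs * (∑ β, A β * A β) * Dg := by
          simp only [Finset.sum_add_distrib, Matrix.mul_sum, Matrix.sum_mul]
      _ = gs * Dg + gs * (∑ β, A β * DA β) * g + (3 : ℂ) • (gs * Dg) := by
          rw [hsand (g * Dgs), htr2, hsq, hMg]
          congr 1
          · congr 1
            have : ((2 : ℂ) * 0) • (1 : Matrix (Fin 2) (Fin 2) ℂ) - -(Dg * gs) = Dg * gs := by
              simp
            rw [this]
            calc gs * (Dg * gs) * g = gs * Dg * (gs * g) := by noncomm_ring
              _ = gs * Dg := by rw [hgsg, Matrix.mul_one]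
          · simp [mul_smul_comm, smul_mul_assoc]
  rw [hstep]
  have expand : (gs * A α * g) * (gs * Dg + gs * (∑ β, A β * DA β) * g + (3 : ℂ) • (gs * Dg))
      = (4:ℂ) • (gs * A α * Dg) + gs * A α * (∑ β, A β * DA β) * g := by
    rw [mul_add, mul_add]
    have f1 : (gs * A α * g) * (gs * Dg) = gs * A α * Dg := by
      calc (gs * A α * g) * (gs * Dg) = gs * A α * ((g * gs) * Dg) := by noncomm_ring
        _ = gs * A α * Dg := by rw [hggs, Matrix.one_mul]
    have f2 : (gs * A α * g) * (gs * (∑ β, A β * DA β) * g)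
        = gs * A α * (∑ β, A β * DA β) * g := by
      calc (gs * A α * g) * (gs * (∑ β, A β * DA β) * g)
          = gs * A α * ((g * gs) * (∑ β, A β * DA β)) * g := by noncomm_ring
        _ = _ := by rw [hggs, Matrix.one_mul, Matrix.mul_assoc]
    rw [f1, f2, Matrix.mul_smul, f1]
    module
  rw [expand, smul_add, smul_smul]
  norm_num

lemma mulVec_sum' (M : Matrix (Fin 2) (Fin 2) ℂ) (v : Fin 3 → Fin 2 → ℂ) :
    M.mulVec (∑ α, v α) = ∑ α, M.mulVec (v α) := by
  ext i
  simp only [Matrix.mulVec, dotProduct, Finset.sum_apply, Finset.mul_sum]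
  rw [Finset.sum_comm]


theorem dirac_gauge_covariance
    (et : (Fin 3 → ℝ) → Fin 3 → Fin 3 → ℝ)
    (het_smooth : ContDiff ℝ (⊤ : ℕ∞) et)
    (het_on : ∀ x : Fin 3 → ℝ, ∀ j k : Fin 3,
      ∑ α, et x j α * et x k α = if j = k then 1 else 0)
    (G : (Fin 3 → ℝ) → Matrix (Fin 2) (Fin 2) ℂ)
    (hG_smooth : ∀ i j : Fin 2, ContDiff ℝ (⊤ : ℕ∞) (fun x => G x i j))
    (hG_unitary : ∀ x : Fin 3 → ℝ, G x * (G x)ᴴ = 1)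
    (hG_det : ∀ x : Fin 3 → ℝ, (G x).det = 1)
    (e : (Fin 3 → ℝ) → Fin 3 → Fin 3 → ℝ)
    (he : ∀ x : Fin 3 → ℝ, ∀ j α : Fin 3,
      (e x j α : ℂ) =
        ∑ k, (2⁻¹ : ℂ) * Matrix.trace (pauli j * (G x)ᴴ * pauli k * G x) * (et x k α : ℂ))
    (u : (Fin 3 → ℝ) → Fin 2 → ℂ)
    (hu : ∀ i : Fin 2, ContDiff ℝ (⊤ : ℕ∞) (fun x => u x i)) :
    ∀ x : Fin 3 → ℝ,
      (G x)ᴴ.mulVec (diracOp et (fun y => (G y).mulVec (u y)) x) = diracOp e u x := by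
  intro x
  -- differentiability facts
  have hud : ∀ i, DifferentiableAt ℝ (fun y => u y i) x := fun i =>
    ((hu i).differentiable (by simp)).differentiableAt
  have hGdiff : EDiff G x := fun i j => ((hG_smooth i j).differentiable (by simp)).differentiableAt
  have hEt : ∀ j β : Fin 3, DifferentiableAt ℝ (fun y => ((et y j β : ℝ) : ℂ)) x := by
    intro j β
    have h1 : ContDiff ℝ (⊤ : ℕ∞) (fun y => et y j β) := contDiff_pi.mp (contDiff_pi.mp het_smooth j) β
    exact (Complex.ofRealCLM.differentiable.comp (h1.differentiable (by simp))).differentiableAt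
  have hSig : ∀ β : Fin 3, EDiff (sigmaF et β) x := by
    intro β i j
    have h1 : (fun y => sigmaF et β y i j) = fun y => ∑ k, ((et y k β : ℝ) : ℂ) * pauli k i j := by
      funext y; simp [sigmaF, Matrix.sum_apply, Matrix.smul_apply]
    rw [h1]
    exact DifferentiableAt.fun_sum fun k _ => (hEt k β).mul_const _
  -- sigma e as conjugation
  have hsige : ∀ β (y : Fin 3 → ℝ), sigmaF e β y = (G y)ᴴ * sigmaF et β y * G y := fun β y =>
    sigma_e_eq G et e β y (hG_unitary y) (he y)
  -- derivative of sigma e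
  have hDB : ∀ α β : Fin 3, MD α (sigmaF e β) x
      = (MD α G x)ᴴ * sigmaF et β x * G x + (G x)ᴴ * MD α (sigmaF et β) x * G x
        + (G x)ᴴ * sigmaF et β x * MD α G x := by
    intro α β
    have h1 : MD α (sigmaF e β) x = MD α (fun y => ((G y)ᴴ * sigmaF et β y) * G y) x :=
      MD_congr α (fun y => by rw [hsige β y])
    rw [h1, MD_mul α ((EDiff.conjT hGdiff).mul (hSig β)) hGdiff,
      MD_mul α (EDiff.conjT hGdiff) (hSig β), MD_conjT, Matrix.add_mul]
  -- decomposition of the derivative of G·u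
  have hP : ∀ α : Fin 3, (fun i => pdC α (fun y => (G y).mulVec (u y) i) x)
      = (MD α G x).mulVec (u x) + (G x).mulVec (fun i => pdC α (fun y => u y i) x) := by
    intro α; funext i
    have h1 : (fun y => (G y).mulVec (u y) i) = fun y => ∑ j, G y i j * u y j := by
      funext y; simp [Matrix.mulVec, dotProduct]
    rw [h1, pdC_sum α x (fun j _ => (hGdiff i j).fun_mul (hud j))]
    simp only [Pi.add_apply, Matrix.mulVec, dotProduct, MD, Matrix.of_apply]
    rw [← Finset.sum_add_distrib]
    exact Finset.sum_congr rfl fun j _ => pdC_mul α x (hGdiff i j) (hud j)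
  -- unitarity, both ways
  have hggs := hG_unitary x
  have hgsg : (G x)ᴴ * G x = 1 := mul_eq_one_comm.mp hggs
  -- main computation
  unfold diracOp
  rw [Matrix.mulVec_smul, mulVec_sum']
  congr 1
  refine Finset.sum_congr rfl fun α _ => ?_
  rw [Matrix.mulVec_mulVec, hP α]
  have key := key_identity (G x) ((G x)ᴴ) (MD α G x) ((MD α G x)ᴴ)
    (fun β => sigmaF et β x) (fun β => MD α (sigmaF et β) x) α hggs hgsg
    (unitary_deriv G x α hGdiff hG_unitary)
    (det_deriv_trace G x α hGdiff hG_unitary hG_det)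
    (sigma_sandwich et x (het_on x))
    (sigma_sq_sum et x (het_on x))
  -- rewrite matrix coefficients
  have hQ' : sigmaF e α x * ((4⁻¹ : ℂ) • ∑ β : Fin 3,
        sigmaF e β x * Matrix.of (fun i j => pdC α (fun y => sigmaF e β y i j) x))
      = (G x)ᴴ * sigmaF et α x * MD α G x + (4⁻¹ : ℂ) •
          ((G x)ᴴ * sigmaF et α x * (∑ β, sigmaF et β x * MD α (sigmaF et β) x) * G x) := by
    have hofMD : ∀ β : Fin 3, Matrix.of (fun i j => pdC α (fun y => sigmaF e β y i j) x)
        = MD α (sigmaF e β) x := fun β => rfl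
    calc sigmaF e α x * ((4⁻¹ : ℂ) • ∑ β : Fin 3,
          sigmaF e β x * Matrix.of (fun i j => pdC α (fun y => sigmaF e β y i j) x))
        = (4⁻¹ : ℂ) • (((G x)ᴴ * sigmaF et α x * G x) * ∑ β : Fin 3,
            ((G x)ᴴ * sigmaF et β x * G x) *
              ((MD α G x)ᴴ * sigmaF et β x * G x + (G x)ᴴ * MD α (sigmaF et β) x * G x
                + (G x)ᴴ * sigmaF et β x * MD α G x)) := by
          rw [mul_smul_comm]
          congr 1
          rw [hsige α x]
          congr 1
          exact Finset.sum_congr rfl fun β _ => by rw [hofMD β, hsige β x, hDB α β]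
      _ = (G x)ᴴ * sigmaF et α x * MD α G x + (4⁻¹ : ℂ) •
            ((G x)ᴴ * sigmaF et α x * (∑ β, sigmaF et β x * MD α (sigmaF et β) x) * G x) := by
          rw [← key]
  have hZ : ((G x)ᴴ * sigmaF et α x) * (((4⁻¹ : ℂ) • ∑ β : Fin 3,
        sigmaF et β x * Matrix.of (fun i j => pdC α (fun y => sigmaF et β y i j) x)) * G x)
      = (4⁻¹ : ℂ) • ((G x)ᴴ * sigmaF et α x * (∑ β, sigmaF et β x * MD α (sigmaF et β) x) * G x) := by
    simp only [MD]
    rw [Matrix.smul_mul, mul_smul_comm]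
    congr 1
    noncomm_ring
  simp only [Matrix.mulVec_add, Matrix.mulVec_mulVec]
  rw [hZ, hQ', hsige α x, Matrix.add_mulVec]
  abel
end
end

section
/- For p = (p₁,p₂,p₃,p₄) ∈ ℝ⁴ satisfying p₁² + p₂² + p₃² + (p₄ − 1)² = 1 (the unit 3-sphere shifted so that its south pole is at the origin), define, for each choice of sign, the vectors 𝐕_{±,1}(p) := (1 − p₄, ∓p₃, ±p₂, p₁), 𝐕_{±,2}(p) := (±p₃, 1 − p₄, ∓p₁, p₂), 𝐕_{±,3}(p) := (∓p₂, ±p₁, 1 − p₄, p₃). Then each 𝐕_{±,k}(p) is orthogonal to the normal vector (p₁, p₂, p₃, p₄ − 1) (hence tangent to the sphere at p), and ⟨𝐕_{±,j}(p), 𝐕_{±,k}(p)⟩ = δ_{jk} for all j, k ∈ {1,2,3}, where ⟨·,·⟩ is the Euclidean inner product on ℝ⁴. -/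
noncomputable section

theorem sphere_ambient_framing_orthonormal_tangent
    (s : ℝ) (hs : s = 1 ∨ s = -1)
    (p : Fin 4 → ℝ)
    (hp : p 0 ^ 2 + p 1 ^ 2 + p 2 ^ 2 + (p 3 - 1) ^ 2 = 1)
    (V : Fin 3 → Fin 4 → ℝ)
    (hV : V = ![![1 - p 3, -s * p 2, s * p 1, p 0],
                ![s * p 2, 1 - p 3, -s * p 0, p 1],
                ![-s * p 1, s * p 0, 1 - p 3, p 2]])
    (n : Fin 4 → ℝ)
    (hn : n = ![p 0, p 1, p 2, p 3 - 1]) :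
    (∀ j : Fin 3, ∑ α, V j α * n α = 0) ∧
    (∀ j k : Fin 3, ∑ α, V j α * V k α = if j = k then 1 else 0) := by
  subst hV hn
  rcases hs with rfl | rfl <;>
  exact ⟨fun j => by fin_cases j <;> simp [Fin.sum_univ_four] <;> nlinarith [hp],
    fun j k => by
      fin_cases j <;> fin_cases k <;> simp [Fin.sum_univ_four] <;> nlinarith [hp]⟩
end
end
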